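/- arXiv:1910.04447 — 2 statements merged into one kernel-verified Lean document; each statement's English description precedes it below -/
import Mathlib

section
/- Let H be a separable Hilbert space and let f^1, …, f^m be H-valued dyadic martingales with f^j_0 = 0 for each j. Then for every n ≥ 1 and every r ≥ 0, P((Σ_{j=1}^m ‖f^j_n‖²)^{1/2} ≥ r) ≤ 2·exp(−r² / (2·‖Σ_{j=1}^m S_{2,n}(f^j)²‖_{L^∞})). -/
open MeasureTheory
open scoped ENNReal NNReal


/-- The σ-algebra on `ℝ` generated by the dyadic intervals of length `2^{-n}`. -/
def dyadicAlgebra (n : ℕ) : MeasurableSpace ℝ :=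
  MeasurableSpace.generateFrom
    {s | ∃ k : ℤ, s = Set.Ico ((k : ℝ) / 2 ^ n) (((k : ℝ) + 1) / 2 ^ n)}

/-- The dyadic filtration on `ℝ`. -/
noncomputable def dyadicFiltration : Filtration ℕ (Real.measurableSpace) where
  seq := dyadicAlgebra
  mono' := monotone_nat_of_le_succ fun n => by
    refine MeasurableSpace.generateFrom_le ?_
    rintro s ⟨k, rfl⟩
    have hab : ((2 * k : ℤ) : ℝ) / 2 ^ (n + 1) ≤ ((2 * k + 1 : ℤ) : ℝ) / 2 ^ (n + 1) := by
      gcongr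
      push_cast; linarith
    have hbc : ((2 * k + 1 : ℤ) : ℝ) / 2 ^ (n + 1)
        ≤ (((2 * k + 1 : ℤ) : ℝ) + 1) / 2 ^ (n + 1) := by
      gcongr
      linarith
    have e1 : ((2 * k : ℤ) : ℝ) / 2 ^ (n + 1) = (k : ℝ) / 2 ^ n := by
      push_cast; field_simp; ring
    have e2 : (((2 * k + 1 : ℤ) : ℝ) + 1) / 2 ^ (n + 1) = ((k : ℝ) + 1) / 2 ^ n := by
      push_cast; field_simp; ring
    have e3 : ((2 * k : ℤ) : ℝ) + 1 = ((2 * k + 1 : ℤ) : ℝ) := by push_cast; ring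
    have key : Set.Ico ((k : ℝ) / 2 ^ n) (((k : ℝ) + 1) / 2 ^ n)
        = Set.Ico (((2 * k : ℤ) : ℝ) / 2 ^ (n + 1)) ((((2 * k : ℤ) : ℝ) + 1) / 2 ^ (n + 1))
        ∪ Set.Ico (((2 * k + 1 : ℤ) : ℝ) / 2 ^ (n + 1))
            ((((2 * k + 1 : ℤ) : ℝ) + 1) / 2 ^ (n + 1)) := by
      rw [e3, Set.Ico_union_Ico_eq_Ico hab hbc, e1, e2]
    rw [key]
    exact MeasurableSet.union
      (MeasurableSpace.measurableSet_generateFrom (by exact ⟨2 * k, rfl⟩))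
      (MeasurableSpace.measurableSet_generateFrom (by exact ⟨2 * k + 1, rfl⟩))
  le' := fun n => MeasurableSpace.generateFrom_le (by rintro s ⟨k, rfl⟩; exact measurableSet_Ico)

/-!
Regard `F = (f¹, …, fᵐ)` as a single dyadic martingale with values in the Hilbert space
`ℓ²(Fin m; H)`. Pinelis' inequality
`cosh (λ‖x + v‖) + cosh (λ‖x - v‖) ≤ 2 cosh (λ‖x‖) exp (λ²‖v‖² / 2)`, which holds because
`‖x ± v‖² = ‖x‖² + ‖v‖² ± 2⟪x, v⟫` and `s ↦ cosh (λ√s)` is a power series with nonnegative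
coefficients, makes `cosh (λ‖F_l‖) exp (-λ² S_{2,l}² / 2)` a supermartingale along the dyadic
tree. Its mean at time `n` is therefore at most `1`, while on `{‖F_n‖ ≥ r}` it is at least
`exp (λr - λ²V / 2) / 2` with `V = ‖S_{2,n}²‖_∞`; take `λ = r / V`.
-/

open Real Finset

theorem add_pow_add_sub_pow_le {c u w : ℝ} (hc : 0 ≤ c) (huw : |u| ≤ w) (k : ℕ) :
    (c + u) ^ k + (c - u) ^ k ≤ (c + w) ^ k + (c - w) ^ k := by
  simp only [sub_eq_add_neg, add_pow, ← sum_add_distrib]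
  refine sum_le_sum fun i _ => ?_
  rcases Nat.even_or_odd (k - i) with he | ho
  · have hpow : u ^ (k - i) ≤ w ^ (k - i) := by
      rw [← he.pow_abs]; exact pow_le_pow_left₀ (abs_nonneg u) huw _
    simp only [he.neg_pow]
    gcongr
  · simp [ho.neg_pow]

theorem hasSum_cosh_mul_sqrt (lam : ℝ) {s : ℝ} (hs : 0 ≤ s) :
    HasSum (fun m : ℕ => (lam ^ 2) ^ m / (2 * m).factorial * s ^ m) (cosh (lam * √s)) := by
  convert hasSum_cosh (lam * √s) using 2 with m
  rw [pow_mul, mul_pow, sq_sqrt hs, mul_pow]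
  ring

theorem cosh_mul_sqrt_add_add_cosh_mul_sqrt_sub_le (lam : ℝ) {c u w : ℝ} (huw : |u| ≤ w)
    (hwc : w ≤ c) :
    cosh (lam * √(c + u)) + cosh (lam * √(c - u))
      ≤ cosh (lam * √(c + w)) + cosh (lam * √(c - w)) := by
  have hu := abs_le.1 (huw.trans hwc)
  have hw : 0 ≤ w := (abs_nonneg u).trans huw
  refine hasSum_le (fun m => ?_)
    ((hasSum_cosh_mul_sqrt lam (s := c + u) (by linarith)).add
      (hasSum_cosh_mul_sqrt lam (s := c - u) (by linarith)))
    ((hasSum_cosh_mul_sqrt lam (s := c + w) (by linarith)).add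
      (hasSum_cosh_mul_sqrt lam (s := c - w) (by linarith)))
  simp only [← mul_add]
  exact mul_le_mul_of_nonneg_left (add_pow_add_sub_pow_le (by linarith) huw m) (by positivity)

theorem cosh_mul_abs (lam y : ℝ) : cosh (lam * |y|) = cosh (lam * y) := by
  rcases abs_cases y with ⟨h, _⟩ | ⟨h, _⟩ <;> simp [h]

theorem cosh_norm_add_add_cosh_norm_sub_le {E : Type*} [NormedAddCommGroup E]
    [InnerProductSpace ℝ E] (lam : ℝ) (x v : E) :
    cosh (lam * ‖x + v‖) + cosh (lam * ‖x - v‖) ≤ 2 * cosh (lam * ‖x‖) * cosh (lam * ‖v‖) := by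
  have hinner : |2 * inner ℝ x v| ≤ 2 * (‖x‖ * ‖v‖) := by
    rw [abs_mul, abs_two]
    gcongr
    exact abs_real_inner_le_norm x v
  have hamgm : 2 * (‖x‖ * ‖v‖) ≤ ‖x‖ ^ 2 + ‖v‖ ^ 2 := by
    nlinarith [sq_nonneg (‖x‖ - ‖v‖)]
  have hadd : ‖x‖ ^ 2 + ‖v‖ ^ 2 + 2 * inner ℝ x v = ‖x + v‖ ^ 2 := by
    rw [norm_add_sq_real]; ring
  have hsub : ‖x‖ ^ 2 + ‖v‖ ^ 2 - 2 * inner ℝ x v = ‖x - v‖ ^ 2 := by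
    rw [norm_sub_sq_real]; ring
  have key := cosh_mul_sqrt_add_add_cosh_mul_sqrt_sub_le lam hinner hamgm
  rw [hadd, hsub, sqrt_sq (norm_nonneg _), sqrt_sq (norm_nonneg _),
    show ‖x‖ ^ 2 + ‖v‖ ^ 2 + 2 * (‖x‖ * ‖v‖) = (‖x‖ + ‖v‖) ^ 2 by ring,
    show ‖x‖ ^ 2 + ‖v‖ ^ 2 - 2 * (‖x‖ * ‖v‖) = (‖x‖ - ‖v‖) ^ 2 by ring,
    sqrt_sq (by positivity), sqrt_sq_eq_abs, cosh_mul_abs, mul_add, mul_sub, cosh_add,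
    cosh_sub] at key
  linarith

theorem cosh_mul_exp_add_cosh_mul_exp_le {E : Type*} [NormedAddCommGroup E]
    [InnerProductSpace ℝ E] (lam q : ℝ) (y v : E) :
    cosh (lam * ‖y + v‖) * exp (-(lam ^ 2 / 2) * (q + ‖v‖ ^ 2))
        + cosh (lam * ‖y - v‖) * exp (-(lam ^ 2 / 2) * (q + ‖v‖ ^ 2))
      ≤ 2 * (cosh (lam * ‖y‖) * exp (-(lam ^ 2 / 2) * q)) := by
  have hv : cosh (lam * ‖v‖) * exp (-(lam ^ 2 / 2) * ‖v‖ ^ 2) ≤ 1 :=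
    calc _ ≤ exp ((lam * ‖v‖) ^ 2 / 2) * exp (-(lam ^ 2 / 2) * ‖v‖ ^ 2) := by
          gcongr; exact cosh_le_exp_half_sq _
      _ = 1 := by rw [← exp_add, ← exp_zero]; ring_nf
  calc _ = (cosh (lam * ‖y + v‖) + cosh (lam * ‖y - v‖))
          * exp (-(lam ^ 2 / 2) * ‖v‖ ^ 2) * exp (-(lam ^ 2 / 2) * q) := by
        rw [mul_add, exp_add]; ring
    _ ≤ 2 * cosh (lam * ‖y‖) * cosh (lam * ‖v‖)
          * exp (-(lam ^ 2 / 2) * ‖v‖ ^ 2) * exp (-(lam ^ 2 / 2) * q) := by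
        gcongr; exact cosh_norm_add_add_cosh_norm_sub_le lam y v
    _ = 2 * (cosh (lam * ‖y‖) * exp (-(lam ^ 2 / 2) * q))
          * (cosh (lam * ‖v‖) * exp (-(lam ^ 2 / 2) * ‖v‖ ^ 2)) := by ring
    _ ≤ 2 * (cosh (lam * ‖y‖) * exp (-(lam ^ 2 / 2) * q)) :=
        mul_le_of_le_one_right (by positivity) hv

theorem Finset.sum_range_two_mul {M : Type*} [AddCommMonoid M] (f : ℕ → M) (m : ℕ) :
    ∑ k ∈ range (2 * m), f k = ∑ j ∈ range m, (f (2 * j) + f (2 * j + 1)) := by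
  induction m with
  | zero => simp
  | succ m ih => rw [mul_add_one, sum_range_succ, sum_range_succ, sum_range_succ, ih, add_assoc]

section DyadicTree

/-- Level `l` of the tree `x` has the nodes `k < 2 ^ l`; the children of node `k` are the nodes
`2 * k` and `2 * k + 1` of level `l + 1`. -/
def IsDyadicMartingaleTree {E : Type*} [AddCommGroup E] [Module ℝ E] (x : ℕ → ℕ → E) : Prop :=
  ∀ l k, k < 2 ^ l → x l k = (2 : ℝ)⁻¹ • (x (l + 1) (2 * k) + x (l + 1) (2 * k + 1))

variable {E : Type*} [NormedAddCommGroup E]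

/-- `S_{2,n}²` along the path from the root to node `k` of level `n`. -/
def pathSqVariation (x : ℕ → ℕ → E) : ℕ → ℕ → ℝ
  | 0, _ => 0
  | n + 1, k => pathSqVariation x n (k / 2) + ‖x (n + 1) k - x n (k / 2)‖ ^ 2

variable [InnerProductSpace ℝ E] {x : ℕ → ℕ → E}

/-- The supermartingale property of `cosh (lam * ‖x n‖) * exp (-(lam ^ 2 / 2) * S_{2,n}²)`. -/
theorem sum_cosh_mul_exp_pathSqVariation_le (lam : ℝ) (hx : IsDyadicMartingaleTree x) (n : ℕ) :
    ∑ k ∈ range (2 ^ n), cosh (lam * ‖x n k‖) * exp (-(lam ^ 2 / 2) * pathSqVariation x n k)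
      ≤ 2 ^ n * cosh (lam * ‖x 0 0‖) := by
  induction n with
  | zero => simp [pathSqVariation]
  | succ n ih =>
    have hstep : ∀ j < 2 ^ n,
        cosh (lam * ‖x (n + 1) (2 * j)‖) * exp (-(lam ^ 2 / 2) * pathSqVariation x (n + 1) (2 * j))
          + cosh (lam * ‖x (n + 1) (2 * j + 1)‖)
            * exp (-(lam ^ 2 / 2) * pathSqVariation x (n + 1) (2 * j + 1))
        ≤ 2 * (cosh (lam * ‖x n j‖) * exp (-(lam ^ 2 / 2) * pathSqVariation x n j)) := by
      intro j hj
      have hright : x (n + 1) (2 * j + 1) = x n j - (x (n + 1) (2 * j) - x n j) := by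
        rw [hx n j hj]; module
      obtain ⟨v, hl, hr⟩ :
          ∃ v, x (n + 1) (2 * j) = x n j + v ∧ x (n + 1) (2 * j + 1) = x n j - v :=
        ⟨_, (add_sub_cancel _ _).symm, hright⟩
      simp only [pathSqVariation, show 2 * j / 2 = j by omega, show (2 * j + 1) / 2 = j by omega]
      rw [hl, hr, add_sub_cancel_left, sub_sub_cancel_left, norm_neg]
      exact cosh_mul_exp_add_cosh_mul_exp_le lam _ _ _
    rw [pow_succ', sum_range_two_mul]
    calc _ ≤ ∑ j ∈ range (2 ^ n),
          2 * (cosh (lam * ‖x n j‖) * exp (-(lam ^ 2 / 2) * pathSqVariation x n j)) :=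
          sum_le_sum fun j hj => hstep j (mem_range.1 hj)
      _ ≤ 2 ^ (n + 1) * cosh (lam * ‖x 0 0‖) := by
          rw [← mul_sum, pow_succ' (2 : ℝ) n, mul_assoc]; gcongr

theorem card_le_of_pathSqVariation_le (hx : IsDyadicMartingaleTree x) (hx0 : x 0 0 = 0)
    {n : ℕ} {r V : ℝ} (hr : 0 ≤ r) (hV : 0 < V) (hxV : ∀ k < 2 ^ n, pathSqVariation x n k ≤ V) :
    (#{k ∈ range (2 ^ n) | r ≤ ‖x n k‖} : ℝ) ≤ 2 ^ n * (2 * exp (-r ^ 2 / (2 * V))) := by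
  set B := {k ∈ range (2 ^ n) | r ≤ ‖x n k‖}
  -- `lam = r / V` maximizes `lam * r - lam ^ 2 * V / 2`.
  set lam := r / V
  have hterm : ∀ k ∈ B, exp (r ^ 2 / (2 * V)) / 2
      ≤ cosh (lam * ‖x n k‖) * exp (-(lam ^ 2 / 2) * pathSqVariation x n k) := by
    intro k hk
    obtain ⟨hk, hrk⟩ := mem_filter.1 hk
    calc exp (r ^ 2 / (2 * V)) / 2 = exp (lam * r) / 2 * exp (-(lam ^ 2 / 2) * V) := by
          rw [div_mul_eq_mul_div, ← exp_add]; congr 2; simp only [lam]; field_simp; ring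
      _ ≤ cosh (lam * r) * exp (-(lam ^ 2 / 2) * V) := by
          gcongr; rw [cosh_eq]; linarith [exp_pos (-(lam * r))]
      _ ≤ cosh (lam * ‖x n k‖) * exp (-(lam ^ 2 / 2) * pathSqVariation x n k) := by
          gcongr ?_ * exp ?_
          · rw [cosh_le_cosh, abs_of_nonneg (by positivity), abs_of_nonneg (by positivity)]
            gcongr
          · exact mul_le_mul_of_nonpos_left (hxV k (mem_range.1 hk)) (by nlinarith)
  have hsum : (#B : ℝ) * (exp (r ^ 2 / (2 * V)) / 2) ≤ 2 ^ n :=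
    calc _ = ∑ _k ∈ B, exp (r ^ 2 / (2 * V)) / 2 := by rw [sum_const, nsmul_eq_mul]
      _ ≤ ∑ k ∈ B, cosh (lam * ‖x n k‖) * exp (-(lam ^ 2 / 2) * pathSqVariation x n k) :=
          sum_le_sum hterm
      _ ≤ ∑ k ∈ range (2 ^ n),
            cosh (lam * ‖x n k‖) * exp (-(lam ^ 2 / 2) * pathSqVariation x n k) :=
          sum_le_sum_of_subset_of_nonneg (filter_subset _ _) fun _ _ _ => by positivity
      _ ≤ 2 ^ n * cosh (lam * ‖x 0 0‖) := sum_cosh_mul_exp_pathSqVariation_le lam hx n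
      _ = 2 ^ n := by rw [hx0, norm_zero, mul_zero, cosh_zero, mul_one]
  rw [neg_div, exp_neg, ← div_eq_mul_inv, mul_div_assoc', le_div_iff₀ (exp_pos _)]
  linarith

end DyadicTree

section DyadicInterval

def dyadicInterval (n k : ℕ) : Set ℝ := Set.Ico (k / 2 ^ n) ((k + 1) / 2 ^ n)

variable {n k : ℕ} {ω : ℝ}

theorem mem_dyadicInterval_iff : ω ∈ dyadicInterval n k ↔ ⌊ω * 2 ^ n⌋ = k := by
  rw [dyadicInterval, Set.mem_Ico, Int.floor_eq_iff, div_le_iff₀ (by positivity),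
    lt_div_iff₀ (by positivity)]
  push_cast
  rfl

theorem left_mem_dyadicInterval (n k : ℕ) : (k / 2 ^ n : ℝ) ∈ dyadicInterval n k := by
  rw [mem_dyadicInterval_iff, div_mul_cancel₀ _ (by positivity), Int.floor_natCast]

theorem mem_dyadicInterval_floor (hω : 0 ≤ ω) : ω ∈ dyadicInterval n ⌊ω * 2 ^ n⌋₊ := by
  rw [mem_dyadicInterval_iff, Int.natCast_floor_eq_floor (by positivity)]

theorem floor_mul_two_pow_lt (hω : ω < 1) : ⌊ω * 2 ^ n⌋₊ < 2 ^ n := by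
  rw [Nat.floor_lt' (by positivity)]
  push_cast
  nlinarith [pow_pos (two_pos : (0 : ℝ) < 2) n]

theorem dyadicInterval_eq_union (n k : ℕ) :
    dyadicInterval n k = dyadicInterval (n + 1) (2 * k) ∪ dyadicInterval (n + 1) (2 * k + 1) := by
  have hmid : ((2 * k : ℕ) + 1 : ℝ) / 2 ^ (n + 1) = (2 * k + 1 : ℕ) / 2 ^ (n + 1) := by
    push_cast; ring
  rw [dyadicInterval, dyadicInterval, dyadicInterval, hmid,
    Set.Ico_union_Ico_eq_Ico (by gcongr; simp) (by gcongr; simp)]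
  congr 1 <;> push_cast <;> field_simp <;> ring

theorem disjoint_dyadicInterval_two_mul (n k : ℕ) :
    Disjoint (dyadicInterval (n + 1) (2 * k)) (dyadicInterval (n + 1) (2 * k + 1)) := by
  rw [Set.disjoint_left]
  intro ω h h'
  rw [mem_dyadicInterval_iff] at h h'
  omega

theorem dyadicInterval_succ_subset (n k : ℕ) :
    dyadicInterval (n + 1) k ⊆ dyadicInterval n (k / 2) := by
  rcases Nat.even_or_odd' k with ⟨j, rfl | rfl⟩ <;> rw [dyadicInterval_eq_union n]
  · rw [show 2 * j / 2 = j by omega]; exact Set.subset_union_left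
  · rw [show (2 * j + 1) / 2 = j by omega]; exact Set.subset_union_right

theorem dyadicInterval_subset_Icc (hk : k < 2 ^ n) : dyadicInterval n k ⊆ Set.Icc 0 1 := by
  rintro ω ⟨h0, h1⟩
  have hk' : (k : ℝ) + 1 ≤ 2 ^ n := by exact_mod_cast hk
  refine ⟨le_trans (by positivity) h0, h1.le.trans ?_⟩
  rwa [div_le_one (by positivity)]

theorem volume_dyadicInterval (n k : ℕ) :
    volume (dyadicInterval n k) = ENNReal.ofReal ((2 ^ n)⁻¹) := by
  rw [dyadicInterval, Real.volume_Ico, ← sub_div, add_sub_cancel_left, one_div]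

theorem restrict_Icc_dyadicInterval_ne_zero (hk : k < 2 ^ n) :
    volume.restrict (Set.Icc 0 1) (dyadicInterval n k) ≠ 0 := by
  rw [Measure.restrict_apply' measurableSet_Icc,
    Set.inter_eq_left.2 (dyadicInterval_subset_Icc hk), volume_dyadicInterval]
  simp

theorem measurableSet_dyadicInterval (n k : ℕ) :
    MeasurableSet[dyadicAlgebra n] (dyadicInterval n k) :=
  MeasurableSpace.measurableSet_generateFrom ⟨k, by simp [dyadicInterval]⟩

theorem dyadicAlgebra_le_comap_floor (n : ℕ) :
    dyadicAlgebra n ≤ (⊤ : MeasurableSpace ℤ).comap fun ω : ℝ => ⌊ω * 2 ^ n⌋ := by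
  refine MeasurableSpace.generateFrom_le ?_
  rintro _ ⟨k, rfl⟩
  refine ⟨{k}, trivial, ?_⟩
  ext ω
  rw [Set.mem_preimage, Set.mem_singleton_iff, Int.floor_eq_iff, Set.mem_Ico,
    div_le_iff₀ (by positivity), lt_div_iff₀ (by positivity)]

theorem MeasureTheory.StronglyMeasurable.eq_of_mem_dyadicInterval {Z : Type*}
    [TopologicalSpace Z] [TopologicalSpace.PseudoMetrizableSpace Z] [T1Space Z] {g : ℝ → Z}
    (hg : StronglyMeasurable[dyadicAlgebra n] g) (hω : ω ∈ dyadicInterval n k) :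
    g ω = g (k / 2 ^ n) :=
  (hg.mono (dyadicAlgebra_le_comap_floor n)).factorsThrough <| by
    rw [mem_dyadicInterval_iff.1 hω, mem_dyadicInterval_iff.1 (left_mem_dyadicInterval n k)]

theorem setIntegral_dyadicInterval {E : Type*} [NormedAddCommGroup E] [NormedSpace ℝ E]
    [CompleteSpace E] {g : ℝ → E} (hg : StronglyMeasurable[dyadicAlgebra n] g)
    (hk : k < 2 ^ n) :
    ∫ ω in dyadicInterval n k, g ω ∂volume.restrict (Set.Icc 0 1)
      = ((2 : ℝ) ^ n)⁻¹ • g (k / 2 ^ n) := by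
  rw [setIntegral_congr_fun (s := dyadicInterval n k) measurableSet_Ico
      fun ω hω => hg.eq_of_mem_dyadicInterval hω,
    setIntegral_const, measureReal_def, Measure.restrict_apply' measurableSet_Icc,
    Set.inter_eq_left.2 (dyadicInterval_subset_Icc hk), volume_dyadicInterval,
    ENNReal.toReal_ofReal (by positivity)]

end DyadicInterval

theorem MeasureTheory.Martingale.isDyadicMartingaleTree {E : Type*} [NormedAddCommGroup E]
    [NormedSpace ℝ E] [CompleteSpace E] {g : ℕ → ℝ → E}
    (hg : Martingale g dyadicFiltration (volume.restrict (Set.Icc 0 1))) :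
    IsDyadicMartingaleTree fun l (k : ℕ) => g l (k / 2 ^ l) := by
  intro l k hk
  have hk' : 2 * k + 1 < 2 ^ (l + 1) := by rw [pow_succ]; omega
  have heq := hg.setIntegral_eq l.le_succ (by exact measurableSet_dyadicInterval l k)
  rw [setIntegral_dyadicInterval (hg.stronglyAdapted l) hk, dyadicInterval_eq_union,
    setIntegral_union (disjoint_dyadicInterval_two_mul l k) measurableSet_Ico
      (hg.integrable _).integrableOn (hg.integrable _).integrableOn,
    setIntegral_dyadicInterval (hg.stronglyAdapted _) (by omega),
    setIntegral_dyadicInterval (hg.stronglyAdapted _) hk', ← smul_add, pow_succ, mul_inv,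
    mul_smul] at heq
  exact smul_right_injective E (by positivity) heq

theorem le_essSup_of_forall_mem_eq {α β : Type*} [MeasurableSpace α] [CompleteLattice β]
    {μ : Measure α} {g : α → β} {s : Set α} {c : β} (hs : MeasurableSet s) (hμs : μ s ≠ 0)
    (hg : ∀ ω ∈ s, g ω = c) : c ≤ essSup g μ :=
  calc c = essSup g (μ.restrict s) := by
        rw [essSup_congr_ae ((ae_restrict_mem hs).mono hg), essSup_const c (by simpa using hμs)]
    _ ≤ essSup g μ := essSup_mono_measure' Measure.restrict_le_self

open Classical in
theorem measure_le_card_mul_of_dyadic {n : ℕ} {S : Set ℝ}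
    (hS : ∀ (k : ℕ) ω, ω ∈ dyadicInterval n k → ω ∈ S → (k / 2 ^ n : ℝ) ∈ S) :
    volume.restrict (Set.Icc 0 1) S
      ≤ #((range (2 ^ n)).filter fun k : ℕ => (k / 2 ^ n : ℝ) ∈ S)
        * ENNReal.ofReal ((2 ^ n)⁻¹) := by
  set B := (range (2 ^ n)).filter fun k : ℕ => (k / 2 ^ n : ℝ) ∈ S
  have hcover : S ∩ Set.Icc 0 1 ⊆ {1} ∪ ⋃ k ∈ B, dyadicInterval n k := by
    rintro ω ⟨hωS, hω0, hω1⟩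
    rcases hω1.lt_or_eq with hω1 | hω1
    · refine Or.inr (Set.mem_biUnion ?_ (mem_dyadicInterval_floor hω0))
      exact mem_filter.2 ⟨mem_range.2 (floor_mul_two_pow_lt hω1),
        hS _ _ (mem_dyadicInterval_floor hω0) hωS⟩
    · exact Or.inl hω1
  rw [Measure.restrict_apply' measurableSet_Icc]
  refine (measure_mono hcover).trans ((measure_union_le _ _).trans ?_)
  rw [Real.volume_singleton, zero_add]
  refine (measure_biUnion_finset_le _ _).trans_eq ?_
  simp only [volume_dyadicInterval, sum_const, nsmul_eq_mul]

section DyadicProcess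

variable {E : Type*} [NormedAddCommGroup E] {F : ℕ → ℝ → E}

theorem sum_norm_sub_sq_eq_pathSqVariation
    (hF : ∀ l (k : ℕ) ω, ω ∈ dyadicInterval l k → F l ω = F l (k / 2 ^ l)) {n k : ℕ} {ω : ℝ}
    (hω : ω ∈ dyadicInterval n k) :
    ∑ l ∈ range n, ‖F (l + 1) ω - F l ω‖ ^ 2
      = pathSqVariation (fun l (k : ℕ) => F l (k / 2 ^ l)) n k := by
  induction n generalizing k with
  | zero => rfl
  | succ n ih =>
    have hparent := dyadicInterval_succ_subset n k hω
    rw [sum_range_succ, ih hparent, pathSqVariation, hF _ _ _ hω, hF _ _ _ hparent]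

theorem measure_norm_ge_le_two_mul_exp_of_dyadic [InnerProductSpace ℝ E]
    (hF : ∀ l (k : ℕ) ω, ω ∈ dyadicInterval l k → F l ω = F l (k / 2 ^ l))
    (hmid : IsDyadicMartingaleTree fun l (k : ℕ) => F l (k / 2 ^ l)) (hF0 : F 0 0 = 0)
    (n : ℕ) {r : ℝ} (hr : 0 ≤ r) :
    volume.restrict (Set.Icc 0 1) {ω | r ≤ ‖F n ω‖}
      ≤ ENNReal.ofReal (2 * exp (-r ^ 2 / (2 * (essSup
          (fun ω => ∑ l ∈ range n, ENNReal.ofReal (‖F (l + 1) ω - F l ω‖ ^ 2))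
          (volume.restrict (Set.Icc 0 1))).toReal))) := by
  set ES := essSup (fun ω => ∑ l ∈ range n, ENNReal.ofReal (‖F (l + 1) ω - F l ω‖ ^ 2))
    (volume.restrict (Set.Icc (0 : ℝ) 1))
  -- `ES.toReal = 0` also when `ES = ∞`; then the bound is the trivial `2`.
  rcases ENNReal.toReal_nonneg.eq_or_lt with hV | hV
  · rw [← hV, mul_zero, div_zero, exp_zero, mul_one]
    refine (measure_mono (Set.subset_univ _)).trans ?_
    simp [ENNReal.ofReal_ofNat]
  set x : ℕ → ℕ → E := fun l k => F l (k / 2 ^ l)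
  have hxV : ∀ k < 2 ^ n, pathSqVariation x n k ≤ ES.toReal := by
    intro k hk
    rw [← ENNReal.ofReal_le_iff_le_toReal (ENNReal.toReal_pos_iff.1 hV).2.ne]
    refine le_essSup_of_forall_mem_eq measurableSet_Ico
      (restrict_Icc_dyadicInterval_ne_zero hk) fun ω hω => ?_
    rw [← ENNReal.ofReal_sum_of_nonneg fun _ _ => sq_nonneg _,
      sum_norm_sub_sq_eq_pathSqVariation hF hω]
  have hcard := card_le_of_pathSqVariation_le hmid (by simp [x, hF0]) hr hV hxV
  refine (measure_le_card_mul_of_dyadic (n := n) fun k ω hω hωS => ?_).trans ?_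
  · show r ≤ ‖F n _‖
    rwa [← hF _ _ _ hω]
  rw [← ENNReal.ofReal_natCast, ← ENNReal.ofReal_mul (by positivity)]
  refine ENNReal.ofReal_le_ofReal ?_
  rw [← div_eq_mul_inv, div_le_iff₀ (by positivity), mul_comm]
  refine le_of_eq_of_le ?_ hcard
  congr 2

end DyadicProcess

theorem double_dyadic_concentration_hilbert_general
    {H : Type*} [NormedAddCommGroup H] [InnerProductSpace ℝ H] [CompleteSpace H]
    (M : ℕ) (f : Fin M → ℕ → ℝ → H)
    (hf : ∀ j, Martingale (f j) dyadicFiltration (volume.restrict (Set.Icc (0 : ℝ) 1)))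
    (hf0 : ∀ j, f j 0 = 0)
    (n : ℕ) (r : ℝ) (hr : 0 ≤ r) :
    (volume.restrict (Set.Icc (0 : ℝ) 1))
        {ω | r ≤ Real.sqrt (∑ j, ‖f j n ω‖ ^ 2)}
      ≤ ENNReal.ofReal (2 * Real.exp (-(r ^ 2) /
          (2 * (essSup
              (fun ω => ∑ j, ∑ l ∈ Finset.range n,
                ENNReal.ofReal (‖f j (l + 1) ω - f j l ω‖ ^ 2))
              (volume.restrict (Set.Icc (0 : ℝ) 1))).toReal))) := by
  set F : ℕ → ℝ → PiLp 2 (fun _ : Fin M => H) := fun l ω => WithLp.toLp 2 fun j => f j l ω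
  have hnorm : ∀ l ω, ‖F l ω‖ = √(∑ j, ‖f j l ω‖ ^ 2) := fun l ω => PiLp.norm_eq_of_L2 _
  have hincr : ∀ ω, ∑ l ∈ range n, ENNReal.ofReal (‖F (l + 1) ω - F l ω‖ ^ 2)
      = ∑ j, ∑ l ∈ range n, ENNReal.ofReal (‖f j (l + 1) ω - f j l ω‖ ^ 2) := fun ω => by
    simp_rw [PiLp.norm_sq_eq_of_L2, ENNReal.ofReal_sum_of_nonneg fun _ _ => sq_nonneg _]
    exact sum_comm
  have hconc := measure_norm_ge_le_two_mul_exp_of_dyadic (F := F)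
    (fun l k ω hω => by ext j; exact ((hf j).stronglyAdapted l).eq_of_mem_dyadicInterval hω)
    (fun l k hk => by ext j; exact (hf j).isDyadicMartingaleTree l k hk)
    (by ext j; simp [F, hf0]) n hr
  simpa only [hnorm, hincr] using hconc

theorem double_dyadic_concentration_hilbert
    {H : Type*} [NormedAddCommGroup H] [InnerProductSpace ℝ H] [CompleteSpace H]
    [TopologicalSpace.SeparableSpace H]
    (M : ℕ) (f : Fin M → ℕ → ℝ → H)
    (hf : ∀ j, Martingale (f j) dyadicFiltration (volume.restrict (Set.Icc (0 : ℝ) 1)))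
    (hf0 : ∀ j, f j 0 = 0)
    (n : ℕ) (hn : 1 ≤ n) (r : ℝ) (hr : 0 ≤ r) :
    (volume.restrict (Set.Icc (0 : ℝ) 1))
        {ω | r ≤ Real.sqrt (∑ j, ‖f j n ω‖ ^ 2)}
      ≤ ENNReal.ofReal (2 * Real.exp (-(r ^ 2) /
          (2 * (essSup
              (fun ω => ∑ j, ∑ l ∈ Finset.range n,
                ENNReal.ofReal (‖f j (l + 1) ω - f j l ω‖ ^ 2))
              (volume.restrict (Set.Icc (0 : ℝ) 1))).toReal))) :=
  double_dyadic_concentration_hilbert_general M f hf hf0 n r hr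
end

section
/- Let H be a separable Hilbert space and let f = (f_j)_{j≥0} be an H-valued conditionally symmetric martingale. Then for every β > 0, r > 0, b > 0 and α ≥ 0, P(there exists n ≥ 1 such that ‖f_n − f_0‖/(α + β·S_{2,n}(f)²) ≥ r and 1/S_{2,n}(f)² ≤ b) ≤ 4·exp(−r²·(β²/(2b) + αβ)). -/
/-
Write `dₖ = fₖ - fₖ₋₁`, `Qₙ = ∑_{k ≤ n} ‖dₖ‖²` and `L = rβ`. In a real inner product space Pinelis'
inequality `cosh ‖g + d‖ + cosh ‖g - d‖ ≤ 2 cosh ‖g‖ exp (‖d‖² / 2)` holds, so averaging over the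
sign of `dₙ₊₁` shows that `Gₙ = cosh (L ‖fₙ - f₀‖) exp (-L² Qₙ / 2)` satisfies
`∫_A Gₙ₊₁ ≤ ∫_A Gₙ` for every `A ∈ σ(d₁, …, dₙ)`: conditional symmetry says precisely that
flipping the sign of `dₙ₊₁` does not change the joint law of `(d₁, …, dₙ₊₁)`. Hence `G` is a
nonnegative supermartingale with `G₀ = 1`, and Ville's maximal inequality gives
`P(∃ n, Gₙ ≥ t) ≤ 1 / t`. On the event of the theorem, `Gₙ ≥ exp (r² (β² / (2b) + αβ)) / 2`.
-/

open MeasureTheory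
open scoped ENNReal NNReal

/-- A martingale (given by its sequence `f`) is conditionally symmetric: for every `j ≥ 1`
and every bounded continuous `φ : X^j → ℝ`,
`E φ(d_1,…,d_{j−1},d_j) = E φ(d_1,…,d_{j−1},−d_j)`, where `d_k = f_k − f_{k−1}`. -/
def CondSymmetric {Ω : Type*} [MeasurableSpace Ω] (μ : Measure Ω)
    {X : Type*} [NormedAddCommGroup X] (f : ℕ → Ω → X) : Prop :=
  ∀ j : ℕ, ∀ φ : (Fin (j + 1) → X) → ℝ, Continuous φ → (∃ C, ∀ v, |φ v| ≤ C) →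
    (∫ ω, φ (fun i => f ((i : ℕ) + 1) ω - f (i : ℕ) ω) ∂μ) =
    (∫ ω, φ (fun i => if (i : ℕ) = j then -(f ((i : ℕ) + 1) ω - f (i : ℕ) ω)
        else f ((i : ℕ) + 1) ω - f (i : ℕ) ω) ∂μ)

namespace Real

lemma sinh_le_mul_cosh {t : ℝ} (ht : 0 ≤ t) : sinh t ≤ t * cosh t := by
  have hmono : MonotoneOn (fun u => u * cosh u - sinh u) (Set.Ici 0) := by
    refine monotoneOn_of_deriv_nonneg (convex_Ici 0) (by fun_prop) (by fun_prop) fun s hs => ?_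
    rw [interior_Ici] at hs
    have hderiv : HasDerivAt (fun u => u * cosh u - sinh u) (s * sinh s) s :=
      (((hasDerivAt_id s).mul (hasDerivAt_cosh s)).sub (hasDerivAt_sinh s)).congr_deriv (by simp)
    rw [hderiv.deriv]
    exact mul_nonneg hs.le (sinh_nonneg_iff.2 hs.le)
  simpa using hmono Set.self_mem_Ici ht ht

lemma antitoneOn_cosh_mul_exp_neg_sq_div_two :
    AntitoneOn (fun t => cosh t * exp (-t ^ 2 / 2)) (Set.Ici 0) := by
  refine antitoneOn_of_deriv_nonpos (convex_Ici 0) (by fun_prop) (by fun_prop) fun s hs => ?_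
  rw [interior_Ici] at hs
  have hderiv : HasDerivAt (fun t => cosh t * exp (-t ^ 2 / 2))
      ((sinh s - s * cosh s) * exp (-s ^ 2 / 2)) s := by
    have hexp := ((hasDerivAt_pow 2 s).neg.div_const 2).exp
    exact ((hasDerivAt_cosh s).mul hexp).congr_deriv (by simp only [Pi.neg_apply]; push_cast; ring)
  rw [hderiv.deriv]
  exact mul_nonpos_of_nonpos_of_nonneg (by linarith [sinh_le_mul_cosh hs.le]) (exp_pos _).le

lemma cosh_le_cosh_mul_exp_sq_sub_sq {x u : ℝ} (hx : 0 ≤ x) (hxu : x ≤ u) :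
    cosh u ≤ cosh x * exp ((u ^ 2 - x ^ 2) / 2) := by
  have h := antitoneOn_cosh_mul_exp_neg_sq_div_two hx (hx.trans hxu) hxu
  calc cosh u = cosh u * exp (-u ^ 2 / 2) * exp (u ^ 2 / 2) := by
        rw [mul_assoc, ← exp_add, neg_div, neg_add_cancel, exp_zero, mul_one]
    _ ≤ cosh x * exp (-x ^ 2 / 2) * exp (u ^ 2 / 2) := by gcongr
    _ = cosh x * exp ((u ^ 2 - x ^ 2) / 2) := by
        rw [mul_assoc, ← exp_add]; ring_nf

end Real

open Real

lemma cosh_norm_add_add_cosh_norm_sub_le_s16 {H : Type*} [NormedAddCommGroup H]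
    [InnerProductSpace ℝ H] (g d : H) :
    cosh ‖g + d‖ + cosh ‖g - d‖ ≤ 2 * cosh ‖g‖ * exp (‖d‖ ^ 2 / 2) := by
  set u := (‖g + d‖ + ‖g - d‖) / 2
  set v := (‖g + d‖ - ‖g - d‖) / 2
  have hsum : cosh ‖g + d‖ + cosh ‖g - d‖ = 2 * (cosh u * cosh v) := by
    rw [show ‖g + d‖ = u + v by ring, show ‖g - d‖ = u - v by ring, cosh_add, cosh_sub]
    ring
  have hparallelogram : u ^ 2 + v ^ 2 = ‖g‖ ^ 2 + ‖d‖ ^ 2 := by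
    simp only [u, v]
    linarith [norm_add_sq_real g d, norm_sub_sq_real g d]
  have hgu : ‖g‖ ≤ u := by
    have := norm_add_le (g + d) (g - d)
    rw [show g + d + (g - d) = (2 : ℝ) • g by module, norm_smul] at this
    norm_num at this
    simp only [u]
    linarith
  calc cosh ‖g + d‖ + cosh ‖g - d‖ = 2 * (cosh u * cosh v) := hsum
    _ ≤ 2 * (cosh ‖g‖ * exp ((u ^ 2 - ‖g‖ ^ 2) / 2) * exp (v ^ 2 / 2)) := by
        gcongr
        · exact cosh_le_cosh_mul_exp_sq_sub_sq (norm_nonneg g) hgu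
        · exact cosh_le_exp_half_sq v
    _ = 2 * cosh ‖g‖ * exp (‖d‖ ^ 2 / 2) := by
        rw [mul_assoc (cosh ‖g‖), ← exp_add]
        rw [show (u ^ 2 - ‖g‖ ^ 2) / 2 + v ^ 2 / 2 = ‖d‖ ^ 2 / 2 by linarith]
        ring

namespace MeasureTheory

variable {Ω : Type*} {m : MeasurableSpace Ω} {μ : Measure Ω}

theorem mul_measure_exists_le_le_lintegral_zero (𝒢 : Filtration ℕ m) {G : ℕ → Ω → ℝ≥0∞}
    (hG : ∀ n, Measurable[𝒢 n] (G n))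
    (hstep : ∀ N s, MeasurableSet[𝒢 N] s → ∫⁻ ω in s, G (N + 1) ω ∂μ ≤ ∫⁻ ω in s, G N ω ∂μ)
    (t : ℝ≥0∞) :
    t * μ {ω | ∃ n, t ≤ G n ω} ≤ ∫⁻ ω, G 0 ω ∂μ := by
  classical
  set A : ℕ → Set Ω := fun N => {ω | ∀ k ≤ N, G k ω < t}
  have hA𝒢 : ∀ N, MeasurableSet[𝒢 N] (A N) := fun N => by
    simp only [A, Set.ofPred_forall]
    exact .iInter fun k => .iInter fun hk =>
      measurableSet_lt ((hG k).mono (𝒢.mono hk) le_rfl) measurable_const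
  have hA : ∀ N, MeasurableSet (A N) := fun N => 𝒢.le N _ (hA𝒢 N)
  -- the process stopped (and capped at `t`) when it first reaches `t`
  set W : ℕ → Ω → ℝ≥0∞ := fun N => (A N).piecewise (G N) fun _ => t
  have hW0 : ∫⁻ ω, W 0 ω ∂μ ≤ ∫⁻ ω, G 0 ω ∂μ := lintegral_mono fun ω => by
    by_cases h : ω ∈ A 0
    · simp [W, h]
    · simp only [W, Set.piecewise_eq_of_notMem _ _ _ h]
      simpa [A] using h
  have hWsucc : ∀ N, ∫⁻ ω, W (N + 1) ω ∂μ ≤ ∫⁻ ω, W N ω ∂μ := fun N => calc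
    ∫⁻ ω, W (N + 1) ω ∂μ ≤ ∫⁻ ω, (A N).piecewise (G (N + 1)) (fun _ => t) ω ∂μ :=
        lintegral_mono fun ω => by
          by_cases hN : ω ∈ A N
          · by_cases hN1 : ω ∈ A (N + 1)
            · simp [W, hN, hN1]
            · simp only [W, Set.piecewise_eq_of_mem _ _ _ hN,
                Set.piecewise_eq_of_notMem _ _ _ hN1]
              obtain ⟨k, hk, htk⟩ : ∃ k ≤ N + 1, t ≤ G k ω := by simpa [A] using hN1
              obtain rfl | hk := hk.eq_or_lt
              · exact htk
              · exact absurd (hN k (Nat.lt_succ_iff.1 hk)) htk.not_gt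
          · have hN1 : ω ∉ A (N + 1) := fun h => hN fun k hk => h k (hk.trans N.le_succ)
            simp [W, hN, hN1]
    _ = ∫⁻ ω in A N, G (N + 1) ω ∂μ + ∫⁻ ω in (A N)ᶜ, t ∂μ := lintegral_piecewise (hA N) _ _
    _ ≤ ∫⁻ ω in A N, G N ω ∂μ + ∫⁻ ω in (A N)ᶜ, t ∂μ :=
        add_le_add (hstep N _ (hA𝒢 N)) le_rfl
    _ = ∫⁻ ω, W N ω ∂μ := (lintegral_piecewise (hA N) _ _).symm
  have hAc : ∀ N, t * μ (A N)ᶜ ≤ ∫⁻ ω, G 0 ω ∂μ := fun N => calc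
    t * μ (A N)ᶜ = ∫⁻ ω in (A N)ᶜ, W N ω ∂μ := by
        rw [← setLIntegral_const]
        exact setLIntegral_congr_fun (hA N).compl fun ω hω =>
          (Set.piecewise_eq_of_notMem (A N) (G N) (fun _ => t) hω).symm
    _ ≤ ∫⁻ ω, W N ω ∂μ := setLIntegral_le_lintegral _ _
    _ ≤ ∫⁻ ω, W 0 ω ∂μ :=
        antitone_nat_of_succ_le (f := fun N => ∫⁻ ω, W N ω ∂μ) hWsucc N.zero_le
    _ ≤ ∫⁻ ω, G 0 ω ∂μ := hW0
  have hunion : {ω | ∃ n, t ≤ G n ω} = ⋃ N, (A N)ᶜ := by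
    ext ω
    simpa [A] using ⟨fun ⟨n, h⟩ => ⟨n, n, le_rfl, h⟩, fun ⟨_, n, _, h⟩ => ⟨n, h⟩⟩
  have hmono : Monotone fun N => (A N)ᶜ := fun N M hNM =>
    Set.compl_subset_compl.2 fun ω hω k hk => hω k (hk.trans hNM)
  rw [hunion, hmono.measure_iUnion, ENNReal.mul_iSup]
  exact iSup_le hAc

end MeasureTheory

section Increments

variable {Ω X : Type*} {m : MeasurableSpace Ω} [NormedAddCommGroup X]

def increments (f : ℕ → Ω → X) (n : ℕ) (ω : Ω) : Fin n → X := fun i => f (i + 1) ω - f i ω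

lemma increments_succ (f : ℕ → Ω → X) (n : ℕ) (ω : Ω) :
    increments f (n + 1) ω = Fin.snoc (increments f n ω) (f (n + 1) ω - f n ω) := by
  ext i
  cases i using Fin.lastCases <;> simp [increments]

lemma sum_increments (f : ℕ → Ω → X) (n : ℕ) (ω : Ω) :
    ∑ i, increments f n ω i = f n ω - f 0 ω := by
  simp only [increments, Fin.sum_univ_eq_sum_range (fun i => f (i + 1) ω - f i ω)]
  exact Finset.sum_range_sub (f · ω) n

variable [MeasurableSpace X] [BorelSpace X] [SecondCountableTopology X] {f : ℕ → Ω → X}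

lemma measurable_increments (hf : ∀ n, Measurable (f n)) (n : ℕ) :
    Measurable (increments f n) :=
  measurable_pi_lambda _ fun _ => (hf _).sub (hf _)

def incrementsFiltration (hf : ∀ n, Measurable (f n)) : Filtration ℕ m where
  seq n := MeasurableSpace.comap (increments f n) inferInstance
  mono' n k hnk := by
    have hrestrict : increments f n = (fun v i => v (Fin.castLE hnk i)) ∘ increments f k := rfl
    change MeasurableSpace.comap _ _ ≤ MeasurableSpace.comap _ _
    rw [hrestrict, ← MeasurableSpace.comap_comp]
    exact MeasurableSpace.comap_mono
      (measurable_pi_lambda _ fun _ => measurable_pi_apply _).comap_le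
  le' n := (measurable_increments hf n).comap_le

def negLastIncrements (f : ℕ → Ω → X) (n : ℕ) (ω : Ω) : Fin (n + 1) → X :=
  Fin.snoc (increments f n ω) (-(f (n + 1) ω - f n ω))

lemma measurable_negLastIncrements (hf : ∀ n, Measurable (f n)) (n : ℕ) :
    Measurable (negLastIncrements f n) :=
  (continuous_fst.finSnoc (A := fun _ => X) continuous_snd).measurable.comp
    ((measurable_increments hf n).prodMk ((hf _).sub (hf _)).neg)

variable {μ : Measure Ω} [IsFiniteMeasure μ]

lemma CondSymmetric.map_increments_succ (hsymm : CondSymmetric μ f) (hf : ∀ n, Measurable (f n))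
    (N : ℕ) : μ.map (increments f (N + 1)) = μ.map (negLastIncrements f N) := by
  have hflip : ∀ ω, negLastIncrements f N ω =
      fun i : Fin (N + 1) => if (i : ℕ) = N then -(f (i + 1) ω - f i ω)
        else f (i + 1) ω - f i ω := fun ω => by
    ext i
    cases i using Fin.lastCases with
    | last => simp [negLastIncrements]
    | cast i => simp [negLastIncrements, increments, i.isLt.ne]
  refine ext_of_forall_integral_eq_of_IsFiniteMeasure fun φ => ?_
  rw [integral_map (measurable_increments hf _).aemeasurable φ.continuous.aestronglyMeasurable,
    integral_map (measurable_negLastIncrements hf _).aemeasurable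
      φ.continuous.aestronglyMeasurable]
  simp only [hflip]
  exact hsymm N φ φ.continuous ⟨‖φ‖, fun v => φ.norm_coe_le_norm v⟩

lemma CondSymmetric.setLIntegral_increments_succ (hsymm : CondSymmetric μ f)
    (hf : ∀ n, Measurable (f n)) (N : ℕ) {Φ : (Fin (N + 1) → X) → ℝ≥0∞} (hΦ : Measurable Φ)
    {s : Set Ω} (hs : MeasurableSet[incrementsFiltration hf N] s) :
    ∫⁻ ω in s, Φ (increments f (N + 1) ω) ∂μ = ∫⁻ ω in s, Φ (negLastIncrements f N ω) ∂μ := by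
  obtain ⟨B, hB, rfl⟩ := hs
  -- both vectors have the same first `N` coordinates, so `s` is a condition on them
  set Ψ := (Fin.init ⁻¹' B).indicator Φ
  have hΨ : Measurable Ψ :=
    hΦ.indicator (measurable_pi_lambda _ (fun _ => measurable_pi_apply _) hB)
  have hs := measurable_increments hf N hB
  calc ∫⁻ ω in increments f N ⁻¹' B, Φ (increments f (N + 1) ω) ∂μ
      = ∫⁻ ω, Ψ (increments f (N + 1) ω) ∂μ := by
        rw [← lintegral_indicator hs]
        congr with ω
    _ = ∫⁻ ω, Ψ (negLastIncrements f N ω) ∂μ := by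
        rw [← lintegral_map hΨ (measurable_increments hf _),
          ← lintegral_map hΨ (measurable_negLastIncrements hf _),
          hsymm.map_increments_succ hf]
    _ = ∫⁻ ω in increments f N ⁻¹' B, Φ (negLastIncrements f N ω) ∂μ := by
        rw [← lintegral_indicator hs]
        congr with ω
        by_cases hω : increments f N ω ∈ B <;> simp [Ψ, negLastIncrements, hω]

end Increments

section PinelisWeight

variable {H : Type*} [NormedAddCommGroup H]

noncomputable def pinelisWeight (L : ℝ) {n : ℕ} (w : Fin n → H) : ℝ :=
  cosh (L * ‖∑ i, w i‖) * exp (-(L ^ 2 * ∑ i, ‖w i‖ ^ 2) / 2)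

lemma continuous_pinelisWeight (L : ℝ) (n : ℕ) :
    Continuous (pinelisWeight (H := H) L (n := n)) := by
  unfold pinelisWeight; fun_prop

lemma pinelisWeight_nonneg (L : ℝ) {n : ℕ} (w : Fin n → H) : 0 ≤ pinelisWeight L w :=
  mul_nonneg (cosh_pos _).le (exp_pos _).le

@[simp]
lemma pinelisWeight_zero (L : ℝ) (w : Fin 0 → H) : pinelisWeight L w = 1 := by
  simp [pinelisWeight]

lemma pinelisWeight_snoc_add_snoc_neg_le [InnerProductSpace ℝ H] (L : ℝ) {n : ℕ} (w : Fin n → H)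
    (x : H) :
    pinelisWeight L (Fin.snoc w x : Fin (n + 1) → H) +
        pinelisWeight L (Fin.snoc w (-x) : Fin (n + 1) → H) ≤ 2 * pinelisWeight L w := by
  simp only [pinelisWeight, Fin.sum_univ_castSucc, Fin.snoc_castSucc, Fin.snoc_last, norm_neg,
    ← sub_eq_add_neg]
  set g := ∑ i, w i
  set q := ∑ i, ‖w i‖ ^ 2
  have hcosh : ∀ y : H, cosh ‖L • y‖ = cosh (L * ‖y‖) := fun y => by
    rw [norm_smul, Real.norm_eq_abs, ← cosh_abs (L * ‖y‖), abs_mul, abs_norm]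
  have hpinelis := cosh_norm_add_add_cosh_norm_sub_le_s16 (L • g) (L • x)
  rw [← smul_add, ← smul_sub, hcosh, hcosh, hcosh, norm_smul, mul_pow, Real.norm_eq_abs,
    sq_abs] at hpinelis
  calc cosh (L * ‖g + x‖) * exp (-(L ^ 2 * (q + ‖x‖ ^ 2)) / 2) +
        cosh (L * ‖g - x‖) * exp (-(L ^ 2 * (q + ‖x‖ ^ 2)) / 2)
      = (cosh (L * ‖g + x‖) + cosh (L * ‖g - x‖)) * exp (-(L ^ 2 * (q + ‖x‖ ^ 2)) / 2) := by ring
    _ ≤ 2 * cosh (L * ‖g‖) * exp (L ^ 2 * ‖x‖ ^ 2 / 2) * exp (-(L ^ 2 * (q + ‖x‖ ^ 2)) / 2) := by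
        gcongr
    _ = 2 * (cosh (L * ‖g‖) * exp (-(L ^ 2 * q) / 2)) := by
        rw [mul_assoc _ (exp _), ← exp_add]
        ring_nf

end PinelisWeight

section Step

variable {Ω H : Type*} {m : MeasurableSpace Ω} {μ : Measure Ω} [IsFiniteMeasure μ]
  [NormedAddCommGroup H] [InnerProductSpace ℝ H] [MeasurableSpace H] [BorelSpace H]
  [SecondCountableTopology H] {f : ℕ → Ω → H}

theorem CondSymmetric.setLIntegral_pinelisWeight_succ_le (hsymm : CondSymmetric μ f)
    (hf : ∀ n, Measurable (f n)) (L : ℝ) (N : ℕ) {s : Set Ω}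
    (hs : MeasurableSet[incrementsFiltration hf N] s) :
    ∫⁻ ω in s, ENNReal.ofReal (pinelisWeight L (increments f (N + 1) ω)) ∂μ ≤
      ∫⁻ ω in s, ENNReal.ofReal (pinelisWeight L (increments f N ω)) ∂μ := by
  have hΦ : ∀ n, Measurable fun v : Fin n → H => ENNReal.ofReal (pinelisWeight L v) := fun n =>
    ENNReal.measurable_ofReal.comp (continuous_pinelisWeight L n).measurable
  have hpoint : ∀ ω, ENNReal.ofReal (pinelisWeight L (increments f (N + 1) ω)) +
      ENNReal.ofReal (pinelisWeight L (negLastIncrements f N ω)) ≤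
        2 * ENNReal.ofReal (pinelisWeight L (increments f N ω)) := fun ω => by
    rw [← ENNReal.ofReal_add (pinelisWeight_nonneg _ _) (pinelisWeight_nonneg _ _),
      ← ENNReal.ofReal_ofNat 2, ← ENNReal.ofReal_mul zero_le_two, increments_succ]
    exact ENNReal.ofReal_le_ofReal (pinelisWeight_snoc_add_snoc_neg_le L _ _)
  refine (ENNReal.mul_le_mul_iff_right two_ne_zero ENNReal.ofNat_ne_top).1 ?_
  calc 2 * ∫⁻ ω in s, ENNReal.ofReal (pinelisWeight L (increments f (N + 1) ω)) ∂μ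
      = ∫⁻ ω in s, ENNReal.ofReal (pinelisWeight L (increments f (N + 1) ω)) ∂μ +
          ∫⁻ ω in s, ENNReal.ofReal (pinelisWeight L (negLastIncrements f N ω)) ∂μ := by
        rw [two_mul, hsymm.setLIntegral_increments_succ hf N (hΦ _) hs]
    _ = ∫⁻ ω in s, (ENNReal.ofReal (pinelisWeight L (increments f (N + 1) ω)) +
          ENNReal.ofReal (pinelisWeight L (negLastIncrements f N ω))) ∂μ :=
        (lintegral_add_left ((hΦ _).comp (measurable_increments hf _)) _).symm
    _ ≤ ∫⁻ ω in s, 2 * ENNReal.ofReal (pinelisWeight L (increments f N ω)) ∂μ :=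
        lintegral_mono hpoint
    _ = 2 * ∫⁻ ω in s, ENNReal.ofReal (pinelisWeight L (increments f N ω)) ∂μ :=
        lintegral_const_mul 2 ((hΦ _).comp (measurable_increments hf _))

end Step

lemma exp_div_two_le_cosh_mul_exp {α β r b x s : ℝ} (hβ : 0 < β) (hr : 0 < r) (hα : 0 ≤ α)
    (hs : 0 < s) (hrx : r ≤ x / (α + β * s)) (hsb : 1 / s ≤ b) :
    exp (r ^ 2 * (β ^ 2 / (2 * b) + α * β)) / 2 ≤
      cosh (r * β * x) * exp (-((r * β) ^ 2 * s) / 2) := by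
  have hb : 0 < b := (one_div_pos.2 hs).trans_le hsb
  have hx : r * (α + β * s) ≤ x := (le_div_iff₀ (by positivity)).1 hrx
  have hbs : 1 ≤ b * s := by rwa [div_le_iff₀ hs] at hsb
  have hexponent : r ^ 2 * (β ^ 2 / (2 * b) + α * β) ≤ r * β * x - (r * β) ^ 2 * s / 2 := by
    have : β ^ 2 / (2 * b) ≤ β ^ 2 * s / 2 := by
      rw [div_le_iff₀ (by positivity)]; nlinarith [sq_nonneg β]
    nlinarith [mul_le_mul_of_nonneg_left hx (by positivity : 0 ≤ r * β), sq_nonneg r]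
  calc exp (r ^ 2 * (β ^ 2 / (2 * b) + α * β)) / 2
      ≤ exp (r * β * x - (r * β) ^ 2 * s / 2) / 2 := by gcongr
    _ = exp (r * β * x) / 2 * exp (-((r * β) ^ 2 * s) / 2) := by
        rw [sub_eq_add_neg, exp_add]; ring_nf
    _ ≤ cosh (r * β * x) * exp (-((r * β) ^ 2 * s) / 2) := by
        gcongr
        rw [cosh_eq]
        linarith [exp_pos (-(r * β * x))]

theorem de_la_pena_hilbert_general
    {Ω H : Type*} {m : MeasurableSpace Ω} {μ : Measure Ω} [IsProbabilityMeasure μ]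
    [NormedAddCommGroup H] [InnerProductSpace ℝ H]
    [TopologicalSpace.SeparableSpace H]
    (ℱ : Filtration ℕ m)
    (f : ℕ → Ω → H) (hf : Martingale f ℱ μ)
    (hsymm : CondSymmetric μ f)
    (β r b α : ℝ) (hβ : 0 < β) (hr : 0 < r) (hα : 0 ≤ α) :
    μ {ω | ∃ n : ℕ, 1 ≤ n ∧
          0 < (∑ j ∈ Finset.range n, ‖f (j + 1) ω - f j ω‖ ^ 2) ∧
          r ≤ ‖f n ω - f 0 ω‖ /
              (α + β * ∑ j ∈ Finset.range n, ‖f (j + 1) ω - f j ω‖ ^ 2) ∧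
          1 / (∑ j ∈ Finset.range n, ‖f (j + 1) ω - f j ω‖ ^ 2) ≤ b}
      ≤ ENNReal.ofReal (4 * Real.exp (-(r ^ 2) * (β ^ 2 / (2 * b) + α * β))) := by
  borelize H
  have : SecondCountableTopology H := UniformSpace.secondCountable_of_separable H
  have hfm : ∀ n, Measurable (f n) := fun n => ((hf.stronglyAdapted n).mono (ℱ.le n)).measurable
  set c := r ^ 2 * (β ^ 2 / (2 * b) + α * β)
  set t := ENNReal.ofReal (exp c / 2)
  set G : ℕ → Ω → ℝ≥0∞ := fun n ω => ENNReal.ofReal (pinelisWeight (r * β) (increments f n ω))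
  have hG : ∀ n, Measurable[incrementsFiltration hfm n] (G n) := fun n =>
    (ENNReal.measurable_ofReal.comp (continuous_pinelisWeight _ _).measurable).comp
      (comap_measurable _)
  have hmax := mul_measure_exists_le_le_lintegral_zero (μ := μ) (incrementsFiltration hfm) hG
    (fun N _ => hsymm.setLIntegral_pinelisWeight_succ_le hfm _ N) t
  simp only [G, pinelisWeight_zero, ENNReal.ofReal_one, lintegral_one, measure_univ] at hmax
  calc _ ≤ μ {ω | ∃ n, t ≤ G n ω} := by
        refine measure_mono fun ω ⟨n, _, hs, hrx, hsb⟩ => ⟨n, ENNReal.ofReal_le_ofReal ?_⟩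
        have h := exp_div_two_le_cosh_mul_exp hβ hr hα hs hrx hsb
        rwa [← sum_increments, ← Fin.sum_univ_eq_sum_range fun j => ‖f (j + 1) ω - f j ω‖ ^ 2] at h
    _ ≤ t⁻¹ := ENNReal.le_inv_iff_mul_le.2 (by rwa [mul_comm])
    _ = ENNReal.ofReal (2 * exp (-c)) := by
        rw [← ENNReal.ofReal_inv_of_pos (by positivity), exp_neg]
        ring_nf
    _ ≤ ENNReal.ofReal (4 * exp (-(r ^ 2) * (β ^ 2 / (2 * b) + α * β))) := by
        rw [neg_mul]
        gcongr
        norm_num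

theorem de_la_pena_hilbert
    {Ω H : Type*} {m : MeasurableSpace Ω} {μ : Measure Ω} [IsProbabilityMeasure μ]
    [NormedAddCommGroup H] [InnerProductSpace ℝ H] [CompleteSpace H]
    [TopologicalSpace.SeparableSpace H]
    (ℱ : Filtration ℕ m) (hℱ0 : ℱ 0 = ⊥)
    (f : ℕ → Ω → H) (hf : Martingale f ℱ μ)
    (hsymm : CondSymmetric μ f)
    (β r b α : ℝ) (hβ : 0 < β) (hr : 0 < r) (hb : 0 < b) (hα : 0 ≤ α) :
    μ {ω | ∃ n : ℕ, 1 ≤ n ∧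
          0 < (∑ j ∈ Finset.range n, ‖f (j + 1) ω - f j ω‖ ^ 2) ∧
          r ≤ ‖f n ω - f 0 ω‖ /
              (α + β * ∑ j ∈ Finset.range n, ‖f (j + 1) ω - f j ω‖ ^ 2) ∧
          1 / (∑ j ∈ Finset.range n, ‖f (j + 1) ω - f j ω‖ ^ 2) ≤ b}
      ≤ ENNReal.ofReal (4 * Real.exp (-(r ^ 2) * (β ^ 2 / (2 * b) + α * β))) :=
  de_la_pena_hilbert_general ℱ f hf hsymm β r b α hβ hr hα
end
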